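/- arXiv:2602.06513 — 8 statements merged into one kernel-verified Lean document; each statement's English description precedes it below -/
import Mathlib

section
/- Define the tensors Ã_{ijk} = ∫₀¹ φ_i(ζ) φ_j(ζ) φ_k(ζ) dζ and B̃_{ijk} = ∫₀¹ φ_i'(ζ) (∫₀^ζ φ_j(s) ds) φ_k(ζ) dζ, where φ_i are shifted Legendre polynomials on [0,1]. Then for all i,j,k ≥ 1, B̃_{ijk} + Ã_{kji} + B̃_{kji} = 0. -/
open intervalIntegral Polynomial

/-- The classical Legendre polynomial on `[-1,1]`, via Rodrigues' formula. -/
noncomputable def legendre (n : ℕ) : Polynomial ℝ :=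
  Polynomial.C (1 / (2 ^ n * (n.factorial : ℝ))) * derivative^[n] ((X ^ 2 - 1) ^ n)

/-- The shifted Legendre polynomial `φ_i(ζ) = (-1)^i L_i(2ζ-1)` on `[0,1]`. -/
noncomputable def shiftedLegendre (i : ℕ) (ζ : ℝ) : ℝ :=
  (-1) ^ i * (legendre i).eval (2 * ζ - 1)

/-- `Ã_{ijk} = ∫₀¹ φ_i φ_j φ_k dζ`. -/
noncomputable def Atil (i j k : ℕ) : ℝ :=
  ∫ ζ in (0:ℝ)..1, shiftedLegendre i ζ * shiftedLegendre j ζ * shiftedLegendre k ζ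

/-- `B̃_{ijk} = ∫₀¹ φ_i'(ζ) (∫₀^ζ φ_j(s) ds) φ_k(ζ) dζ`. -/
noncomputable def Btil (i j k : ℕ) : ℝ :=
  ∫ ζ in (0:ℝ)..1,
    deriv (shiftedLegendre i) ζ * (∫ s in (0:ℝ)..ζ, shiftedLegendre j s) * shiftedLegendre k ζ

noncomputable def slP (i : ℕ) : Polynomial ℝ :=
  C ((-1 : ℝ) ^ i) * (legendre i).comp (C 2 * X - C 1)

lemma sl_eq (i : ℕ) (ζ : ℝ) : shiftedLegendre i ζ = (slP i).eval ζ := by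
  simp [_root_.shiftedLegendre, slP, eval_comp]

lemma sl_hasDerivAt (i : ℕ) (ζ : ℝ) :
    HasDerivAt (shiftedLegendre i) ((slP i).derivative.eval ζ) ζ := by
  have h := (slP i).hasDerivAt ζ
  exact h.congr_of_eventuallyEq (Filter.Eventually.of_forall fun x => sl_eq i x)

lemma sl_continuous (i : ℕ) : Continuous (shiftedLegendre i) := by
  have : Continuous fun ζ => (slP i).eval ζ := (slP i).continuous
  exact this.congr fun x => (sl_eq i x).symm

lemma sl_integral_zero {j : ℕ} (hj : 1 ≤ j) :
    ∫ s in (0:ℝ)..1, shiftedLegendre j s = 0 := by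
  obtain ⟨R, hiter, hev1, hevm1⟩ : ∃ R : Polynomial ℝ,
      derivative^[j] ((X ^ 2 - 1) ^ j : Polynomial ℝ) = derivative R ∧
      R.eval 1 = 0 ∧ R.eval (-1) = 0 := by
    refine ⟨derivative^[j - 1] ((X ^ 2 - 1) ^ j), ?_, ?_, ?_⟩
    · rw [← Function.iterate_succ_apply' derivative, Nat.succ_eq_add_one,
        Nat.sub_add_cancel hj]
    all_goals {
      have hdvd : (X ^ 2 - 1 : Polynomial ℝ) ∣ derivative^[j - 1] ((X ^ 2 - 1) ^ j : Polynomial ℝ) := by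
        have := pow_sub_dvd_iterate_derivative_pow (X ^ 2 - 1 : Polynomial ℝ) j (j - 1)
        rwa [Nat.sub_sub_self hj, pow_one] at this
      obtain ⟨q, hq⟩ := hdvd
      rw [hq, eval_mul]
      norm_num }
  -- FTC for H s = R.eval (2s - 1)
  have hH : ∀ s : ℝ, HasDerivAt (fun s : ℝ => R.eval (2 * s - 1))
      ((derivative R).eval (2 * s - 1) * 2) s := by
    intro s
    have h1 : HasDerivAt (fun s : ℝ => 2 * s - 1) 2 s := by
      simpa using ((hasDerivAt_id s).const_mul 2).sub_const 1
    exact (R.hasDerivAt (2 * s - 1)).comp s h1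
  have hcont : Continuous fun s : ℝ => (derivative R).eval (2 * s - 1) * 2 := by
    have h1 : Continuous fun s : ℝ => (2 : ℝ) * s - 1 := by fun_prop
    exact ((derivative R).continuous.comp h1).mul continuous_const
  have hint : ∫ s in (0:ℝ)..1, (derivative R).eval (2 * s - 1) * 2 = 0 := by
    rw [intervalIntegral.integral_eq_sub_of_hasDerivAt (fun s _ => hH s)
      (hcont.intervalIntegrable 0 1)]
    norm_num [hev1, hevm1]
  have hconst : ∀ s : ℝ, shiftedLegendre j s =
      ((-1 : ℝ) ^ j * (1 / (2 ^ j * (j.factorial : ℝ))) / 2) *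
        ((derivative R).eval (2 * s - 1) * 2) := by
    intro s
    simp only [_root_.shiftedLegendre, legendre, hiter, eval_mul, eval_C]
    ring
  calc ∫ s in (0:ℝ)..1, shiftedLegendre j s
      = ∫ s in (0:ℝ)..1, ((-1 : ℝ) ^ j * (1 / (2 ^ j * (j.factorial : ℝ))) / 2) *
        ((derivative R).eval (2 * s - 1) * 2) := by
        exact intervalIntegral.integral_congr fun s _ => hconst s
    _ = 0 := by rw [intervalIntegral.integral_const_mul, hint, mul_zero]

/-- For all `i, j, k ≥ 1`, `B̃_{ijk} + Ã_{kji} + B̃_{kji} = 0`. -/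
theorem tensor_identity (i j k : ℕ) (hi : 1 ≤ i) (hj : 1 ≤ j) (hk : 1 ≤ k) :
    Btil i j k + Atil k j i + Btil k j i = 0 := by
  set Φ : ℝ → ℝ := fun ζ => ∫ s in (0:ℝ)..ζ, shiftedLegendre j s with hΦdef
  have hΦ : ∀ ζ : ℝ, HasDerivAt Φ (shiftedLegendre j ζ) ζ := fun ζ =>
    ((sl_continuous j).integral_hasStrictDerivAt 0 ζ).hasDerivAt
  have hΦcont : Continuous Φ := by
    rw [continuous_iff_continuousAt]; exact fun ζ => (hΦ ζ).continuousAt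
  set di : ℝ → ℝ := fun ζ => (slP i).derivative.eval ζ with hdi
  set dk : ℝ → ℝ := fun ζ => (slP k).derivative.eval ζ with hdk
  have hderivi : deriv (shiftedLegendre i) = di := funext fun ζ => (sl_hasDerivAt i ζ).deriv
  have hderivk : deriv (shiftedLegendre k) = dk := funext fun ζ => (sl_hasDerivAt k ζ).deriv
  -- the product whose derivative we take
  set g : ℝ → ℝ := fun ζ =>
    (di ζ * shiftedLegendre k ζ + shiftedLegendre i ζ * dk ζ) * Φ ζ +
      shiftedLegendre i ζ * shiftedLegendre k ζ * shiftedLegendre j ζ with hg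
  have hG : ∀ ζ : ℝ, HasDerivAt
      (fun ζ => shiftedLegendre i ζ * shiftedLegendre k ζ * Φ ζ) (g ζ) ζ := fun ζ =>
    ((sl_hasDerivAt i ζ).mul (sl_hasDerivAt k ζ)).mul (hΦ ζ)
  have hgcont : Continuous g := by
    apply Continuous.add
    · exact ((((slP i).derivative.continuous).mul (sl_continuous k)).add
        ((sl_continuous i).mul ((slP k).derivative.continuous))).mul hΦcont
    · exact ((sl_continuous i).mul (sl_continuous k)).mul (sl_continuous j)
  have hint : ∫ ζ in (0:ℝ)..1, g ζ = 0 := by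
    rw [intervalIntegral.integral_eq_sub_of_hasDerivAt (fun ζ _ => hG ζ)
      (hgcont.intervalIntegrable 0 1)]
    have h0 : Φ 0 = 0 := intervalIntegral.integral_same
    have h1 : Φ 1 = 0 := sl_integral_zero hj
    simp [h0, h1]
  have hsplit : Btil i j k + Atil k j i + Btil k j i = ∫ ζ in (0:ℝ)..1, g ζ := by
    have hBi : Btil i j k = ∫ ζ in (0:ℝ)..1, di ζ * Φ ζ * shiftedLegendre k ζ := by
      rw [Btil, hderivi]
    have hBk : Btil k j i = ∫ ζ in (0:ℝ)..1, dk ζ * Φ ζ * shiftedLegendre i ζ := by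
      rw [Btil, hderivk]
    have hA : IntervalIntegrable (fun ζ => di ζ * Φ ζ * shiftedLegendre k ζ)
        MeasureTheory.volume 0 1 :=
      ((((slP i).derivative.continuous).mul hΦcont).mul (sl_continuous k)).intervalIntegrable 0 1
    have hB : IntervalIntegrable
        (fun ζ => shiftedLegendre k ζ * shiftedLegendre j ζ * shiftedLegendre i ζ)
        MeasureTheory.volume 0 1 :=
      (((sl_continuous k).mul (sl_continuous j)).mul (sl_continuous i)).intervalIntegrable 0 1
    have hC : IntervalIntegrable (fun ζ => dk ζ * Φ ζ * shiftedLegendre i ζ)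
        MeasureTheory.volume 0 1 :=
      ((((slP k).derivative.continuous).mul hΦcont).mul (sl_continuous i)).intervalIntegrable 0 1
    rw [hBi, hBk, Atil, ← intervalIntegral.integral_add hA hB,
      ← intervalIntegral.integral_add (hA.add hB) hC]
    apply intervalIntegral.integral_congr
    intro ζ _
    simp only [hg]
    ring
  rw [hsplit, hint]
end

section
/- For real functions h, u_m, α_i (i = 1,…,N) of x and constants Ã_{ijk}, B̃_{ijk} satisfying B̃_{ijk} + Ã_{kji} + B̃_{kji} = 0 for all i,j,k, the nonconservative expression Q := Σ_{i,j,k} ((Ã_{ijk} + B̃_{ijk}) α_i α_k ∂_x(h α_j) + Ã_{ijk} h α_i α_j ∂_x α_k) equals the exact derivative ∂_x( Σ_{i,j,k} (Ã_{ijk} + B̃_{ijk}) h α_i α_j α_k ). -/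
open Finset

private lemma comm3 {N : ℕ} (f : Fin N → Fin N → Fin N → ℝ) :
    ∑ i, ∑ j, ∑ k, f i j k = ∑ k, ∑ j, ∑ i, f i j k := by
  rw [Finset.sum_comm]
  refine (Finset.sum_congr rfl fun j _ => Finset.sum_comm).trans ?_
  rw [Finset.sum_comm]

/-- If the tensors satisfy `B̃_{ijk} + Ã_{kji} + B̃_{kji} = 0`, then the nonconservative
expression `Q` equals the exact derivative `∂_x(Σ (Ã+B̃) h α_i α_j α_k)`. -/
theorem nonconservative_term_is_exact_derivative (N : ℕ)
    (A B : Fin N → Fin N → Fin N → ℝ)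
    (hrel : ∀ i j k, B i j k + A k j i + B k j i = 0)
    (h : ℝ → ℝ) (α : Fin N → ℝ → ℝ)
    (hh : Differentiable ℝ h) (hα : ∀ i, Differentiable ℝ (α i)) :
    ∀ x : ℝ,
      (∑ i, ∑ j, ∑ k,
        ((A i j k + B i j k) * α i x * α k x * deriv (fun y => h y * α j y) x
          + A i j k * h x * α i x * α j x * deriv (α k) x))
      = deriv (fun y => ∑ i, ∑ j, ∑ k,
          (A i j k + B i j k) * h y * α i y * α j y * α k y) x := by
  intro x
  have key : HasDerivAt (fun y => ∑ i, ∑ j, ∑ k,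
      (A i j k + B i j k) * h y * α i y * α j y * α k y)
      (∑ i, ∑ j, ∑ k, (A i j k + B i j k) *
        (deriv h x * α i x * α j x * α k x + h x * deriv (α i) x * α j x * α k x
          + h x * α i x * deriv (α j) x * α k x + h x * α i x * α j x * deriv (α k) x)) x := by
    refine HasDerivAt.fun_sum fun i _ => HasDerivAt.fun_sum fun j _ => HasDerivAt.fun_sum fun k _ => ?_
    have := ((((hh x).hasDerivAt.const_mul (A i j k + B i j k)).fun_mul
      ((hα i) x).hasDerivAt).fun_mul ((hα j) x).hasDerivAt).fun_mul ((hα k) x).hasDerivAt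
    refine this.congr_deriv ?_
    ring
  rw [key.deriv]
  have hderiv : ∀ j : Fin N, deriv (fun y => h y * α j y) x
      = deriv h x * α j x + h x * deriv (α j) x :=
    fun j => deriv_mul (hh x) ((hα j) x)
  have main : ∑ i, ∑ j, ∑ k, (A i j k + B i j k) *
        (h x * deriv (α i) x * α j x * α k x)
      = ∑ i, ∑ j, ∑ k, (- B i j k) * (h x * α i x * α j x * deriv (α k) x) := by
    rw [comm3]
    refine Finset.sum_congr rfl fun a _ => Finset.sum_congr rfl fun b _ =>
      Finset.sum_congr rfl fun c _ => ?_
    linear_combination (h x * α a x * α b x * deriv (α c) x) * hrel a b c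
  rw [← sub_eq_zero]
  simp only [← Finset.sum_sub_distrib]
  have step : ∑ i, ∑ j, ∑ k,
      (((A i j k + B i j k) * α i x * α k x * deriv (fun y => h y * α j y) x
          + A i j k * h x * α i x * α j x * deriv (α k) x)
        - (A i j k + B i j k) *
        (deriv h x * α i x * α j x * α k x + h x * deriv (α i) x * α j x * α k x
          + h x * α i x * deriv (α j) x * α k x + h x * α i x * α j x * deriv (α k) x))
      = ∑ i, ∑ j, ∑ k,
      ((- B i j k) * (h x * α i x * α j x * deriv (α k) x)
        - (A i j k + B i j k) * (h x * deriv (α i) x * α j x * α k x)) := by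
    refine Finset.sum_congr rfl fun i _ => Finset.sum_congr rfl fun j _ =>
      Finset.sum_congr rfl fun k _ => ?_
    rw [hderiv j]
    ring
  rw [step]
  simp only [Finset.sum_sub_distrib]
  rw [← main, sub_self]
end

section
/- The total energy E(h, u_m, α, b) = (1/2) h u_m² + (h/2) Σ_{i=1}^N α_i²/(2i+1) + (g/2) h² + g h b, viewed as a function of the conservative variables (h, hu_m, hα_1, …, hα_N) for fixed b, is strictly convex on the region h > 0. -/
private lemma key_eq (x y A C s t : ℝ) (hA : 0 < A) (hC : 0 < C)
    (hD : 0 < s*A + t*C) :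
    s*(x^2/A) + t*(y^2/C) - (s*x+t*y)^2/(s*A+t*C)
      = s*t*(x*C-y*A)^2/(A*C*(s*A+t*C)) := by
  field_simp
  ring

private lemma key_le (x y A C s t : ℝ) (hA : 0 < A) (hC : 0 < C)
    (hs : 0 < s) (ht : 0 < t) :
    (s*x+t*y)^2/(s*A+t*C) ≤ s*(x^2/A) + t*(y^2/C) := by
  have hD : 0 < s*A + t*C := by positivity
  have h := key_eq x y A C s t hA hC hD
  nlinarith [div_nonneg (by positivity : (0:ℝ) ≤ s*t*(x*C-y*A)^2)
    (by positivity : (0:ℝ) ≤ A*C*(s*A+t*C))]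

private lemma key_lt (x y A C s t : ℝ) (hA : 0 < A) (hC : 0 < C)
    (hs : 0 < s) (ht : 0 < t) (hne : x*C ≠ y*A) :
    (s*x+t*y)^2/(s*A+t*C) < s*(x^2/A) + t*(y^2/C) := by
  have hD : 0 < s*A + t*C := by positivity
  have h := key_eq x y A C s t hA hC hD
  have h2 : 0 < s*t*(x*C-y*A)^2/(A*C*(s*A+t*C)) := by
    have : (x*C - y*A) ≠ 0 := sub_ne_zero.mpr hne
    positivity
  linarith

/-- The total energy in conservative variables `q = (q₀, q₁, q₂,…,q_{N+1})` with
`q₀ = h`, `q₁ = hu_m`, `q_{i+1} = hα_i`, i.e.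
`E(q) = q₁²/(2q₀) + Σ_{i=1}^N q_{i+1}²/(2(2i+1)q₀) + (g/2)q₀² + g q₀ b`,
is strictly convex on the region `q₀ > 0`. -/
theorem total_energy_strictConvexOn (N : ℕ) (g b : ℝ) (hg : 0 < g) :
    StrictConvexOn ℝ {q : ℝ × ℝ × (Fin N → ℝ) | 0 < q.1}
      (fun q =>
        q.2.1 ^ 2 / (2 * q.1)
          + (∑ i : Fin N, (q.2.2 i) ^ 2 / (2 * (2 * (i : ℕ) + 3) * q.1))
          + g / 2 * q.1 ^ 2 + g * q.1 * b) := by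
  constructor
  · -- convexity of the set
    intro p hp q hq s t hs ht hst
    simp only [Set.mem_setOf_eq] at *
    have : (s • p + t • q).1 = s * p.1 + t * q.1 := rfl
    show (0:ℝ) < (s • p + t • q).1
    rw [this]
    rcases eq_or_lt_of_le hs with h | h
    · simp [← h, (by linarith : t = 1)] at *
      positivity
    · have : 0 ≤ t * q.1 := mul_nonneg ht hq.le
      nlinarith
  · intro p hp q hq hpq s t hs ht hst
    simp only [Set.mem_setOf_eq] at hp hq
    -- components of the convex combination
    have c0 : (s • p + t • q).1 = s * p.1 + t * q.1 := rfl
    have c1 : (s • p + t • q).2.1 = s * p.2.1 + t * q.2.1 := rfl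
    have c2 : ∀ i, (s • p + t • q).2.2 i = s * p.2.2 i + t * q.2.2 i := fun i => rfl
    simp only [smul_eq_mul, c0, c1, c2]
    have hD : 0 < s * p.1 + t * q.1 := by positivity
    -- momentum term, non-strict
    have hA_le : (s * p.2.1 + t * q.2.1) ^ 2 / (2 * (s * p.1 + t * q.1))
        ≤ s * (p.2.1 ^ 2 / (2 * p.1)) + t * (q.2.1 ^ 2 / (2 * q.1)) := by
      have := key_le p.2.1 q.2.1 (2 * p.1) (2 * q.1) s t (by linarith) (by linarith) hs ht
      have e : s * (2 * p.1) + t * (2 * q.1) = 2 * (s * p.1 + t * q.1) := by ring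
      rwa [e] at this
    -- each summand, non-strict
    have hS_le : ∀ i : Fin N,
        (s * p.2.2 i + t * q.2.2 i) ^ 2 / (2 * (2 * (i : ℕ) + 3) * (s * p.1 + t * q.1))
        ≤ s * ((p.2.2 i) ^ 2 / (2 * (2 * (i : ℕ) + 3) * p.1))
          + t * ((q.2.2 i) ^ 2 / (2 * (2 * (i : ℕ) + 3) * q.1)) := by
      intro i
      have hk : (0:ℝ) < 2 * (2 * (i : ℕ) + 3) := by positivity
      have := key_le (p.2.2 i) (q.2.2 i) (2 * (2 * (i : ℕ) + 3) * p.1)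
        (2 * (2 * (i : ℕ) + 3) * q.1) s t (by positivity) (by positivity) hs ht
      have e : s * (2 * (2 * (i : ℕ) + 3) * p.1) + t * (2 * (2 * (i : ℕ) + 3) * q.1)
          = 2 * (2 * (i : ℕ) + 3) * (s * p.1 + t * q.1) := by ring
      rwa [e] at this
    have hSum_le : (∑ i : Fin N,
        (s * p.2.2 i + t * q.2.2 i) ^ 2 / (2 * (2 * (i : ℕ) + 3) * (s * p.1 + t * q.1)))
        ≤ s * (∑ i : Fin N, (p.2.2 i) ^ 2 / (2 * (2 * (i : ℕ) + 3) * p.1))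
          + t * (∑ i : Fin N, (q.2.2 i) ^ 2 / (2 * (2 * (i : ℕ) + 3) * q.1)) := by
      rw [Finset.mul_sum, Finset.mul_sum, ← Finset.sum_add_distrib]
      exact Finset.sum_le_sum fun i _ => hS_le i
    -- quadratic height term, non-strict
    have hG_le : g / 2 * (s * p.1 + t * q.1) ^ 2
        ≤ s * (g / 2 * p.1 ^ 2) + t * (g / 2 * q.1 ^ 2) := by
      have e : s * (g / 2 * p.1 ^ 2) + t * (g / 2 * q.1 ^ 2)
          - g / 2 * (s * p.1 + t * q.1) ^ 2 = g / 2 * (s * t) * (p.1 - q.1) ^ 2 := by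
        have ht' : t = 1 - s := by linarith
        subst ht'; ring
      have hpos : (0:ℝ) ≤ g / 2 * (s * t) * (p.1 - q.1) ^ 2 :=
        mul_nonneg (mul_nonneg (half_pos hg).le (mul_pos hs ht).le) (sq_nonneg _)
      linarith [e, hpos]
    -- linear term, equality
    have hL : g * (s * p.1 + t * q.1) * b = s * (g * p.1 * b) + t * (g * q.1 * b) := by
      nlinarith [hst]
    by_cases h0 : p.1 = q.1
    · -- heights equal; strictness from momentum or a moment term
      by_cases h1 : p.2.1 = q.2.1
      · -- some moment differs
        have h2 : p.2.2 ≠ q.2.2 := by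
          intro h2
          exact hpq (Prod.ext h0 (Prod.ext h1 h2))
        obtain ⟨i0, hi0⟩ := Function.ne_iff.mp h2
        have hS_lt : (∑ i : Fin N,
            (s * p.2.2 i + t * q.2.2 i) ^ 2 / (2 * (2 * (i : ℕ) + 3) * (s * p.1 + t * q.1)))
            < s * (∑ i : Fin N, (p.2.2 i) ^ 2 / (2 * (2 * (i : ℕ) + 3) * p.1))
              + t * (∑ i : Fin N, (q.2.2 i) ^ 2 / (2 * (2 * (i : ℕ) + 3) * q.1)) := by
          rw [Finset.mul_sum, Finset.mul_sum, ← Finset.sum_add_distrib]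
          refine Finset.sum_lt_sum (fun i _ => hS_le i) ⟨i0, Finset.mem_univ i0, ?_⟩
          have hk : (0:ℝ) < 2 * (2 * (i0 : ℕ) + 3) := by positivity
          have hne : p.2.2 i0 * (2 * (2 * (i0 : ℕ) + 3) * q.1)
              ≠ q.2.2 i0 * (2 * (2 * (i0 : ℕ) + 3) * p.1) := by
            rw [← h0]
            intro hxy
            apply hi0
            have hp1 : (2 * (2 * (i0 : ℕ) + 3) * p.1) ≠ 0 := by positivity
            exact mul_right_cancel₀ hp1 hxy
          have := key_lt (p.2.2 i0) (q.2.2 i0) (2 * (2 * (i0 : ℕ) + 3) * p.1)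
            (2 * (2 * (i0 : ℕ) + 3) * q.1) s t (by positivity) (by positivity) hs ht hne
          have e : s * (2 * (2 * (i0 : ℕ) + 3) * p.1) + t * (2 * (2 * (i0 : ℕ) + 3) * q.1)
              = 2 * (2 * (i0 : ℕ) + 3) * (s * p.1 + t * q.1) := by ring
          rwa [e] at this
        linarith
      · -- strictness from the momentum term
        have hne : p.2.1 * (2 * q.1) ≠ q.2.1 * (2 * p.1) := by
          rw [← h0]
          intro hxy
          apply h1
          have : (2 * p.1) ≠ 0 := by positivity
          exact mul_right_cancel₀ this hxy
        have hA_lt : (s * p.2.1 + t * q.2.1) ^ 2 / (2 * (s * p.1 + t * q.1))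
            < s * (p.2.1 ^ 2 / (2 * p.1)) + t * (q.2.1 ^ 2 / (2 * q.1)) := by
          have := key_lt p.2.1 q.2.1 (2 * p.1) (2 * q.1) s t (by linarith) (by linarith)
            hs ht hne
          have e : s * (2 * p.1) + t * (2 * q.1) = 2 * (s * p.1 + t * q.1) := by ring
          rwa [e] at this
        linarith
    · -- strictness from the g/2 h² term
      have hG_lt : g / 2 * (s * p.1 + t * q.1) ^ 2
          < s * (g / 2 * p.1 ^ 2) + t * (g / 2 * q.1 ^ 2) := by
        have hd : p.1 - q.1 ≠ 0 := sub_ne_zero.mpr h0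
        have e : s * (g / 2 * p.1 ^ 2) + t * (g / 2 * q.1 ^ 2)
            - g / 2 * (s * p.1 + t * q.1) ^ 2 = g / 2 * (s * t) * (p.1 - q.1) ^ 2 := by
          have ht' : t = 1 - s := by linarith
          subst ht'; ring
        have hpos : (0:ℝ) < g / 2 * (s * t) * (p.1 - q.1) ^ 2 :=
          mul_pos (mul_pos (half_pos hg) (mul_pos hs ht)) (sq_pos_of_ne_zero hd)
        linarith [e, hpos]
      linarith
end

section
/- Let ν, λ > 0, h > 0, and let w = (w₁, u_m, α₁/3, α₂/5, …, α_N/(2N+1), b) be the entropy variables of the shallow water moment system. The Newtonian slip friction source S_Ns with bottom friction −(ν/λ)(u_m + Σ_i α_i)·(0,1,3,5,…,2N+1,0)ᵀ and bulk friction −(ν/h)(0,0,(C̃α)ᵀ,0)ᵀ, where C̃_{ij} = (2i+1)∫₀¹ φ_i'(ζ)φ_j'(ζ)dζ, satisfies wᵀ S_Ns ≤ 0. -/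
open intervalIntegral Polynomial

/-- The friction matrix `C̃_{ij} = (2i+1)∫₀¹ φ_i'(ζ)φ_j'(ζ) dζ`; here `i j : Fin N`
represent the indices `i+1, j+1 ∈ {1,…,N}`, so `2i+1` reads `2i+3`. -/
noncomputable def frictionC (N : ℕ) (i j : Fin N) : ℝ :=
  (2 * (i : ℕ) + 3) *
    ∫ ζ in (0:ℝ)..1,
      deriv (shiftedLegendre ((i : ℕ) + 1)) ζ * deriv (shiftedLegendre ((j : ℕ) + 1)) ζ

/-- `shiftedLegendre i` is a polynomial function. -/
noncomputable def shiftedLegendrePoly (i : ℕ) : Polynomial ℝ :=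
  (Polynomial.C ((-1 : ℝ) ^ i)) * (legendre i).comp (Polynomial.C 2 * X - 1)

lemma shiftedLegendre_eq_eval (i : ℕ) :
    _root_.shiftedLegendre i = fun ζ => (shiftedLegendrePoly i).eval ζ := by
  funext ζ
  simp [_root_.shiftedLegendre, shiftedLegendrePoly, Polynomial.eval_comp]

lemma deriv_shiftedLegendre (i : ℕ) :
    deriv (shiftedLegendre i) = fun ζ => (derivative (shiftedLegendrePoly i)).eval ζ := by
  rw [shiftedLegendre_eq_eval]
  funext ζ
  exact Polynomial.deriv _

lemma sum_sum_integral_nonneg (N : ℕ) (q : Fin N → Polynomial ℝ) (α : Fin N → ℝ) :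
    0 ≤ ∑ i, α i * ∑ j, (∫ ζ in (0:ℝ)..1, (q i).eval ζ * (q j).eval ζ) * α j := by
  have key : ∑ i, α i * ∑ j, (∫ ζ in (0:ℝ)..1, (q i).eval ζ * (q j).eval ζ) * α j
      = ∫ ζ in (0:ℝ)..1, (∑ i, α i * (q i).eval ζ) ^ 2 := by
    have : ∀ ζ : ℝ, (∑ i, α i * (q i).eval ζ) ^ 2
        = ∑ i, ∑ j, α i * ((q i).eval ζ * (q j).eval ζ) * α j := by
      intro ζ
      rw [sq, Finset.sum_mul_sum]
      congr 1; funext i; congr 1; funext j; ring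
    have hcont : ∀ i j : Fin N,
        Continuous fun ζ : ℝ => α i * ((q i).eval ζ * (q j).eval ζ) * α j :=
      fun i j => (continuous_const.mul
        ((Polynomial.continuous _).mul (Polynomial.continuous _))).mul continuous_const
    simp_rw [this]
    rw [intervalIntegral.integral_finset_sum (fun i _ =>
      Continuous.intervalIntegrable (continuous_finset_sum _ fun j _ => hcont i j) _ _)]
    refine Finset.sum_congr rfl fun i _ => ?_
    rw [intervalIntegral.integral_finset_sum (fun j _ =>
      Continuous.intervalIntegrable (hcont i j) _ _), Finset.mul_sum]
    refine Finset.sum_congr rfl fun j _ => ?_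
    have : ∀ ζ : ℝ, α i * ((q i).eval ζ * (q j).eval ζ) * α j
        = (α i * α j) * ((q i).eval ζ * (q j).eval ζ) := fun ζ => by ring
    simp_rw [this]
    rw [intervalIntegral.integral_const_mul]
    ring
  rw [key]
  exact intervalIntegral.integral_nonneg (by norm_num) (fun x _ => sq_nonneg _)

/-- The Newtonian slip friction source is entropy dissipative: `wᵀ S_Ns ≤ 0`.
The pairing `wᵀ S_Ns` consists of the bottom friction paired with the entropy
variables `(u_m, α_i/(2i+1))` against the vector `(1, 2i+1)`, plus the bulk friction
paired with `α_i/(2i+1)` against `(C̃α)_i`. -/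
theorem newtonian_slip_entropy_dissipative (N : ℕ) (ν lam h u : ℝ)
    (hν : 0 < ν) (hlam : 0 < lam) (hh : 0 < h) (α : Fin N → ℝ) :
    -(ν / lam) * (u + ∑ i, α i) * (u * 1 + ∑ i, (α i / (2 * (i : ℕ) + 3)) * (2 * (i : ℕ) + 3))
      - (ν / h) * (∑ i, (α i / (2 * (i : ℕ) + 3)) * (∑ j, frictionC N i j * α j)) ≤ 0 := by
  have hc : ∀ i : Fin N, (2 * (i : ℕ) + 3 : ℝ) ≠ 0 := fun i => by positivity
  have h1 : (u * 1 + ∑ i, (α i / (2 * (i : ℕ) + 3)) * (2 * (i : ℕ) + 3))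
      = u + ∑ i, α i := by
    rw [mul_one]
    congr 1
    exact Finset.sum_congr rfl fun i _ => div_mul_cancel₀ _ (hc i)
  have h2 : (∑ i, (α i / (2 * (i : ℕ) + 3)) * (∑ j, frictionC N i j * α j))
      = ∑ i : Fin N, α i * ∑ j : Fin N,
          (∫ ζ in (0:ℝ)..1,
            (derivative (shiftedLegendrePoly ((i : ℕ) + 1))).eval ζ *
            (derivative (shiftedLegendrePoly ((j : ℕ) + 1))).eval ζ) * α j := by
    refine Finset.sum_congr rfl fun i _ => ?_
    have : ∀ j : Fin N, frictionC N i j * α j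
        = (2 * (i : ℕ) + 3) * ((∫ ζ in (0:ℝ)..1,
            (derivative (shiftedLegendrePoly ((i : ℕ) + 1))).eval ζ *
            (derivative (shiftedLegendrePoly ((j : ℕ) + 1))).eval ζ) * α j) := by
      intro j
      rw [frictionC, deriv_shiftedLegendre, deriv_shiftedLegendre]
      ring
    simp_rw [this]
    rw [← Finset.mul_sum]
    have cancel : ∀ a c S : ℝ, c ≠ 0 → a / c * (c * S) = a * S := by
      intro a c S hcne; field_simp
    exact cancel _ _ _ (hc i)
  rw [h1, h2]
  have hb : -(ν / lam) * (u + ∑ i, α i) * (u + ∑ i, α i) ≤ 0 := by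
    have := sq_nonneg (u + ∑ i, α i)
    nlinarith [div_pos hν hlam]
  have hbulk := sum_sum_integral_nonneg N
      (fun i => derivative (shiftedLegendrePoly ((i : ℕ) + 1))) α
  have hgood := mul_nonneg (le_of_lt (div_pos hν hh)) hbulk
  linarith
end

section
/- Let ρ, g, n > 0, ν > 0, h > 0. The Manning friction source S_NM with bottom term −(ρgn²/h^{1/3})|u_m + Σ_iα_i|(u_m + Σ_iα_i)·(0,1,3,…,2N+1,0)ᵀ and bulk term −(ν/h)(0,0,(C̃α)ᵀ,0)ᵀ is entropy dissipative: wᵀ S_NM = −(ρgn²/h^{1/3})|u_m + Σ_iα_i|(u_m + Σ_iα_i)² − (ν/h)∫₀¹(Σ_i φ_i'(ζ)α_i)² dζ ≤ 0, where w are the entropy variables (w₁, u_m, α₁/3, …, α_N/(2N+1), b). -/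
set_option maxHeartbeats 800000

open intervalIntegral Polynomial

noncomputable def slPoly (i : ℕ) : Polynomial ℝ :=
  C ((-1 : ℝ) ^ i) * (legendre i).comp (2 * X - 1)

lemma sl_eq_s11 (i : ℕ) : _root_.shiftedLegendre i = fun ζ => (slPoly i).eval ζ := by
  funext ζ
  simp [_root_.shiftedLegendre, slPoly, eval_comp]

lemma deriv_sl (i : ℕ) :
    deriv (shiftedLegendre i) = fun ζ => (derivative (slPoly i)).eval ζ := by
  rw [sl_eq_s11]; funext ζ; exact Polynomial.deriv _

lemma cont_dsl (i : ℕ) : Continuous (deriv (shiftedLegendre i)) := by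
  rw [deriv_sl]; exact (derivative (slPoly i)).continuous

lemma key (N : ℕ) (α : Fin N → ℝ) :
    (∑ i, (α i / (2 * (i : ℕ) + 3)) * (∑ j, frictionC N i j * α j))
      = ∫ ζ in (0:ℝ)..1,
          (∑ i : Fin N, deriv (shiftedLegendre ((i : ℕ) + 1)) ζ * α i) ^ 2 := by
  set f : Fin N → ℝ → ℝ := fun i => deriv (shiftedLegendre ((i : ℕ) + 1)) with hf
  have hcont : ∀ i : Fin N, Continuous (f i) := fun i => cont_dsl _
  have h1 : ∀ ζ : ℝ, (∑ i : Fin N, f i ζ * α i) ^ 2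
      = ∑ i : Fin N, ∑ j : Fin N, α i * α j * (f i ζ * f j ζ) := by
    intro ζ
    rw [sq, Finset.sum_mul_sum]
    exact Finset.sum_congr rfl fun i _ => Finset.sum_congr rfl fun j _ => by ring
  have hInt : ∀ i j : Fin N, IntervalIntegrable
      (fun ζ => α i * α j * (f i ζ * f j ζ)) MeasureTheory.volume 0 1 :=
    fun i j => (continuous_const.mul ((hcont i).mul (hcont j))).intervalIntegrable _ _
  calc (∑ i, (α i / (2 * (i : ℕ) + 3)) * (∑ j, frictionC N i j * α j))
      = ∑ i : Fin N, ∑ j : Fin N, α i * α j * ∫ ζ in (0:ℝ)..1, f i ζ * f j ζ := by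
        refine Finset.sum_congr rfl fun i _ => ?_
        rw [Finset.mul_sum]
        refine Finset.sum_congr rfl fun j _ => ?_
        have hci : (2 * ((i : ℕ) : ℝ) + 3) ≠ 0 := by positivity
        rw [frictionC]
        field_simp
        ring
    _ = ∫ ζ in (0:ℝ)..1, (∑ i : Fin N, f i ζ * α i) ^ 2 := by
        symm
        simp only [h1]
        rw [intervalIntegral.integral_finset_sum
          (f := fun i ζ => ∑ j : Fin N, α i * α j * (f i ζ * f j ζ))
          (fun i _ => ((continuous_finset_sum _ fun j _ =>
            continuous_const.mul ((hcont i).mul (hcont j))).intervalIntegrable _ _))]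
        refine Finset.sum_congr rfl fun i _ => ?_
        rw [intervalIntegral.integral_finset_sum
          (f := fun j ζ => α i * α j * (f i ζ * f j ζ)) (fun j _ => hInt i j)]
        exact Finset.sum_congr rfl fun j _ => integral_const_mul _ _

/-- The Newtonian Manning friction source is entropy dissipative:
`wᵀ S_NM = −(ρgn²/h^{1/3})|u_m + Σα_i|(u_m + Σα_i)² − (ν/h)∫₀¹(Σ φ_i' α_i)² dζ ≤ 0`. -/
theorem manning_entropy_dissipative (N : ℕ) (ρ g n ν h u : ℝ)
    (hρ : 0 < ρ) (hg : 0 < g) (hn : 0 < n) (hν : 0 < ν) (hh : 0 < h)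
    (α : Fin N → ℝ) :
    (-(ρ * g * n ^ 2 / h ^ ((1:ℝ)/3)) * |u + ∑ i, α i| * (u + ∑ i, α i)
          * (u * 1 + ∑ i, (α i / (2 * (i : ℕ) + 3)) * (2 * (i : ℕ) + 3))
        - (ν / h) * (∑ i, (α i / (2 * (i : ℕ) + 3)) * (∑ j, frictionC N i j * α j))
      = -(ρ * g * n ^ 2 / h ^ ((1:ℝ)/3)) * |u + ∑ i, α i| * (u + ∑ i, α i) ^ 2
        - (ν / h) *
          ∫ ζ in (0:ℝ)..1, (∑ i : Fin N, deriv (shiftedLegendre ((i : ℕ) + 1)) ζ * α i) ^ 2)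
    ∧
    (-(ρ * g * n ^ 2 / h ^ ((1:ℝ)/3)) * |u + ∑ i, α i| * (u + ∑ i, α i)
          * (u * 1 + ∑ i, (α i / (2 * (i : ℕ) + 3)) * (2 * (i : ℕ) + 3))
        - (ν / h) * (∑ i, (α i / (2 * (i : ℕ) + 3)) * (∑ j, frictionC N i j * α j)) ≤ 0) := by
  have hsum : (u * 1 + ∑ i : Fin N, (α i / (2 * (i : ℕ) + 3)) * (2 * (i : ℕ) + 3))
      = u + ∑ i, α i := by
    rw [mul_one]
    congr 1
    refine Finset.sum_congr rfl fun i _ => ?_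
    have hci : (2 * ((i : ℕ) : ℝ) + 3) ≠ 0 := by positivity
    field_simp
  have heq : (-(ρ * g * n ^ 2 / h ^ ((1:ℝ)/3)) * |u + ∑ i, α i| * (u + ∑ i, α i)
          * (u * 1 + ∑ i, (α i / (2 * (i : ℕ) + 3)) * (2 * (i : ℕ) + 3))
        - (ν / h) * (∑ i, (α i / (2 * (i : ℕ) + 3)) * (∑ j, frictionC N i j * α j))
      = -(ρ * g * n ^ 2 / h ^ ((1:ℝ)/3)) * |u + ∑ i, α i| * (u + ∑ i, α i) ^ 2
        - (ν / h) *
          ∫ ζ in (0:ℝ)..1,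
            (∑ i : Fin N, deriv (shiftedLegendre ((i : ℕ) + 1)) ζ * α i) ^ 2) := by
    rw [hsum, key N α]; ring
  refine ⟨heq, ?_⟩
  rw [heq]
  have h13 : (0:ℝ) < h ^ ((1:ℝ)/3) := Real.rpow_pos_of_pos hh _
  have t1 : -(ρ * g * n ^ 2 / h ^ ((1:ℝ)/3)) * |u + ∑ i, α i| * (u + ∑ i, α i) ^ 2 ≤ 0 := by
    have : 0 ≤ (ρ * g * n ^ 2 / h ^ ((1:ℝ)/3)) * |u + ∑ i, α i| * (u + ∑ i, α i) ^ 2 := by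
      positivity
    linarith
  have t2 : 0 ≤ (ν / h) *
      ∫ ζ in (0:ℝ)..1, (∑ i : Fin N, deriv (shiftedLegendre ((i : ℕ) + 1)) ζ * α i) ^ 2 := by
    apply mul_nonneg (by positivity)
    apply intervalIntegral.integral_nonneg (by norm_num)
    intro ζ _
    positivity
  linarith
end

section
/- Under lake-at-rest conditions (h⁻+b⁻ = h⁺+b⁺, u_m^± = 0, α_i^± = 0, h^± > 0), the entropy-conservative fluctuation for the shallow water moment system, D_EC^±(u⁻,u⁺) = f^EC(u⁻,u⁺) − f(u^∓-side) ± ½B(u^∓-side)⟦u⟧ evaluated componentwise, vanishes; in particular its only potentially nonzero component (1/2) g h^± ⟦h+b⟧ equals zero. -/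
open Finset

/-- Under lake-at-rest conditions (`h⁻+b⁻ = h⁺+b⁺`, `u_m^± = 0`, `α_i^± = 0`, `h^± > 0`)
the entropy conservative fluctuation `D_EC^-(u⁻,u⁺) = f^EC(u⁻,u⁺) − f(u⁻) + ½B(u⁻)⟦u⟧`
of the shallow water moment system vanishes componentwise: the mass, momentum and each
moment component is zero; in particular the only potentially nonzero contribution,
`½ g h⁻ ⟦h+b⟧`, equals zero. -/
theorem lake_at_rest_fluctuation_vanishes (N : ℕ) (g : ℝ) (hg : 0 < g)
    (A B : Fin N → Fin N → Fin N → ℝ)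
    (hm hp bm bp umm ump : ℝ) (αm αp : Fin N → ℝ)
    (hhm : 0 < hm) (hhp : 0 < hp)
    (hlake : hm + bm = hp + bp)
    (hum : umm = 0) (hup : ump = 0)
    (hαm : αm = 0) (hαp : αp = 0) :
    -- mass component
    ((hp * ump + hm * umm) / 2 - hm * umm = 0) ∧
    -- momentum component (including the nonconservative term ½ g h⁻ ⟦h+b⟧)
    ((hp * ump + hm * umm) / 2 * ((ump + umm) / 2)
        + (∑ j : Fin N, ((hp * αp j + hm * αm j) / 2) * ((αp j + αm j) / 2)
            / (2 * (j : ℕ) + 3))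
        - (hm * umm ^ 2 + hm * ∑ i : Fin N, (αm i) ^ 2 / (2 * (i : ℕ) + 3))
        + (1 / 2) * g * hm * ((hp - hm) + (bp - bm)) = 0) ∧
    -- moment components
    (∀ i : Fin N,
      (hp * ump + hm * umm) / 2 * ((αp i + αm i) / 2)
          + (hp * αp i + hm * αm i) / 2 * ((ump + umm) / 2)
          + (∑ j : Fin N, ∑ k : Fin N,
              A i j k * ((hp * αp j + hm * αm j) / 2) * ((αp k + αm k) / 2))
          - (2 * hm * umm * αm i + hm * ∑ j : Fin N, ∑ k : Fin N, A i j k * αm j * αm k)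
          + (1 / 2) * (-(umm * (hp * αp i - hm * αm i))
              + ∑ j : Fin N, (∑ k : Fin N, B i j k * αm k) * (hp * αp j - hm * αm j)) = 0) := by
  subst hum hup hαm hαp
  have hjump : (hp - hm) + (bp - bm) = 0 := by linarith
  refine ⟨by ring, ?_, fun i => by simp⟩
  simp [hjump]
end

section
/- Let N ≥ 1, g > 0, h > 0 and define the entropy potential of the shallow water linearized moment equations P^LM := wᵀ f^LM − F^LM, where w = (−u_m²/2 − ½Σ_iα_i²/(2i+1) + g(h+b), u_m, α₁/3,…,α_N/(2N+1), b), f^LM = (hu_m, hu_m² + Ψ, 2hu_mα₁,…,2hu_mα_N, 0) with Ψ = hΣ_i α_i²/(2i+1), and F^LM = ½hu_m³ + (3/2)hu_mΣ_iα_i²/(2i+1) + ghu_m(h+b). Then P^LM = u_m Ψ. -/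
open Finset

/-- The entropy potential of the shallow water linearized moment equations:
`P^LM := wᵀ f^LM − F^LM = u_m Ψ`, where `w` are the entropy variables,
`f^LM = (hu_m, hu_m² + Ψ, 2hu_mα_i, 0)`, `Ψ = hΣα_i²/(2i+1)`, and
`F^LM = ½hu_m³ + (3/2)hu_mΣα_i²/(2i+1) + ghu_m(h+b)`.
Indices `i : Fin N` stand for `i+1 ∈ {1,…,N}`, so `2i+1` reads `2i+3`. -/
theorem swlme_entropy_potential (N : ℕ) (hN : 1 ≤ N) (g h u b : ℝ)
    (hg : 0 < g) (hh : 0 < h) (α : Fin N → ℝ) :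
    ((-u ^ 2 / 2 - (1 / 2) * ∑ i : Fin N, (α i) ^ 2 / (2 * (i : ℕ) + 3) + g * (h + b))
          * (h * u)
        + u * (h * u ^ 2 + h * ∑ i : Fin N, (α i) ^ 2 / (2 * (i : ℕ) + 3))
        + (∑ i : Fin N, (α i / (2 * (i : ℕ) + 3)) * (2 * h * u * α i))
        + b * 0)
      - ((1 / 2) * h * u ^ 3
          + (3 / 2) * h * u * (∑ i : Fin N, (α i) ^ 2 / (2 * (i : ℕ) + 3))
          + g * h * u * (h + b))
      = u * (h * ∑ i : Fin N, (α i) ^ 2 / (2 * (i : ℕ) + 3)) := by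
  have key : (∑ i : Fin N, (α i / (2 * (i : ℕ) + 3)) * (2 * h * u * α i))
      = 2 * h * u * ∑ i : Fin N, (α i) ^ 2 / (2 * (i : ℕ) + 3) := by
    rw [mul_sum]; exact Finset.sum_congr rfl fun i _ => by ring
  rw [key]; ring
end

section
/- Let Ã, B̃ be real tensors indexed by {1,…,N}³ with Ã_{ijk} symmetric in (j,k)-independent form given by Ã_{kji} = −(B̃_{ijk} + B̃_{kji}). Then for arbitrary states h^±, α_i^± ∈ ℝ, the discrete sum Σ_{i,j,k} ( Ã_{ijk} ⟦α_i⟧{hα_j}{α_k} − B̃_{ijk} {α_i α_k} ⟦hα_j⟧ ) equals ⟦ −Σ_{i,j,k} B̃_{ijk} h α_i α_j α_k ⟧, where ⟦·⟧ and {·} denote jump and average of state-wise formed quantities. -/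
open Finset

theorem sum3_swap {N : ℕ} (g : Fin N → Fin N → Fin N → ℝ) :
    ∑ i : Fin N, ∑ j : Fin N, ∑ k : Fin N, g i j k
      = ∑ i : Fin N, ∑ j : Fin N, ∑ k : Fin N, g k j i := by
  calc ∑ i : Fin N, ∑ j : Fin N, ∑ k : Fin N, g i j k
      = ∑ j : Fin N, ∑ i : Fin N, ∑ k : Fin N, g i j k := Finset.sum_comm
    _ = ∑ j : Fin N, ∑ k : Fin N, ∑ i : Fin N, g i j k :=
        Finset.sum_congr rfl fun j _ => Finset.sum_comm
    _ = ∑ k : Fin N, ∑ j : Fin N, ∑ i : Fin N, g i j k := Finset.sum_comm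

/-- If the tensors satisfy `Ã_{kji} = −(B̃_{ijk} + B̃_{kji})`, then
`Σ_{i,j,k}(Ã_{ijk}⟦α_i⟧{hα_j}{α_k} − B̃_{ijk}{α_iα_k}⟦hα_j⟧) = ⟦−Σ B̃_{ijk} hα_iα_jα_k⟧`,
where `⟦φ⟧ = φ⁺ − φ⁻` and `{φ} = (φ⁺+φ⁻)/2` act on state-wise formed quantities. -/
theorem discrete_entropy_potential_jump (N : ℕ)
    (A B : Fin N → Fin N → Fin N → ℝ)
    (hrel : ∀ i j k, A k j i = -(B i j k + B k j i))
    (hm hp : ℝ) (αm αp : Fin N → ℝ) :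
    (∑ i : Fin N, ∑ j : Fin N, ∑ k : Fin N,
        (A i j k * (αp i - αm i) * ((hp * αp j + hm * αm j) / 2) * ((αp k + αm k) / 2)
          - B i j k * ((αp i * αp k + αm i * αm k) / 2) * (hp * αp j - hm * αm j)))
      = (-∑ i : Fin N, ∑ j : Fin N, ∑ k : Fin N, B i j k * hp * αp i * αp j * αp k)
        - (-∑ i : Fin N, ∑ j : Fin N, ∑ k : Fin N, B i j k * hm * αm i * αm j * αm k) := by
  have key : ∀ i j k : Fin N, A i j k = -(B k j i + B i j k) := fun i j k => hrel k j i
  have step1 :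
      (∑ i : Fin N, ∑ j : Fin N, ∑ k : Fin N,
        (A i j k * (αp i - αm i) * ((hp * αp j + hm * αm j) / 2) * ((αp k + αm k) / 2)
          - B i j k * ((αp i * αp k + αm i * αm k) / 2) * (hp * αp j - hm * αm j)))
      = (∑ i : Fin N, ∑ j : Fin N, ∑ k : Fin N,
          (-(B k j i * (αp i - αm i) * ((hp * αp j + hm * αm j) / 2) * ((αp k + αm k) / 2))))
        + (∑ i : Fin N, ∑ j : Fin N, ∑ k : Fin N,
          (-(B i j k * (αp i - αm i) * ((hp * αp j + hm * αm j) / 2) * ((αp k + αm k) / 2))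
            - B i j k * ((αp i * αp k + αm i * αm k) / 2) * (hp * αp j - hm * αm j))) := by
    rw [← Finset.sum_add_distrib]
    refine Finset.sum_congr rfl fun i _ => ?_
    rw [← Finset.sum_add_distrib]
    refine Finset.sum_congr rfl fun j _ => ?_
    rw [← Finset.sum_add_distrib]
    refine Finset.sum_congr rfl fun k _ => ?_
    rw [key i j k]; ring
  rw [step1,
    sum3_swap (fun i j k =>
      -(B k j i * (αp i - αm i) * ((hp * αp j + hm * αm j) / 2) * ((αp k + αm k) / 2)))]
  rw [← Finset.sum_add_distrib, ← Finset.sum_neg_distrib, ← Finset.sum_neg_distrib,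
    ← Finset.sum_sub_distrib]
  refine Finset.sum_congr rfl fun i _ => ?_
  rw [← Finset.sum_add_distrib, ← Finset.sum_neg_distrib, ← Finset.sum_neg_distrib,
    ← Finset.sum_sub_distrib]
  refine Finset.sum_congr rfl fun j _ => ?_
  rw [← Finset.sum_add_distrib, ← Finset.sum_neg_distrib, ← Finset.sum_neg_distrib,
    ← Finset.sum_sub_distrib]
  refine Finset.sum_congr rfl fun k _ => ?_
  ring
end
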